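/- For all positive integers m and all nonnegative integers n, there is a bijection between the set of forests of m colored 5-ary trees of total weight n and the set of proper forests of m colored binary trees with n internal vertices in total; in particular these two sets have the same cardinality. -/

import Mathlib

/-- A complete binary tree: every internal vertex has exactly a left and a right child. -/
inductive BinTree : Type
  | leaf : BinTree
  | node : BinTree → BinTree → BinTree

namespace BinTree

/-- The number of internal vertices of a complete binary tree. -/
def internals : BinTree → ℕ
  | leaf => 0
  | node l r => internals l + internals r + 1

/-- The subtree rooted at the vertex reached from the root by the given path,
where `false` means "go to the left child" and `true` means "go to the right child";
`none` if there is no such vertex. -/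
def subtreeAt : BinTree → List Bool → Option BinTree
  | t, [] => some t
  | leaf, _ :: _ => none
  | node l _, false :: p => subtreeAt l p
  | node _ r, true :: p => subtreeAt r p

/-- The list of (the paths from the root to) all vertices of a complete binary tree. -/
def vertices : BinTree → List (List Bool)
  | leaf => [[]]
  | node l r =>
      [] :: ((vertices l).map (List.cons false) ++ (vertices r).map (List.cons true))

/-- The length of the maximal L-path starting at the root, i.e. the length of the
leftmost path of the tree. -/
def leftLen : BinTree → ℕ
  | leaf => 0
  | node l _ => leftLen l + 1

/-- `p` is (the path from the root to) an *initial vertex* of `t`: it is a vertex of `t`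
which is not the left child of its father (it is the root or a right child), so it is the
starting vertex of a maximal L-path. -/
def IsInitial (t : BinTree) (p : List Bool) : Prop :=
  (subtreeAt t p).isSome ∧ (p = [] ∨ p.getLast? = some true)

/-- The length `l(v)` of the associated maximal L-path of the vertex `v` at path `p`
(junk value `0` if `p` is not a vertex of `t`). -/
def pathLen (t : BinTree) (p : List Bool) : ℕ :=
  match subtreeAt t p with
  | some s => leftLen s
  | none => 0

end BinTree

/-- A colored binary tree: a complete binary tree together with an assignment of a color
`c(v)` with `0 ≤ c(v) ≤ ⌊l(v)/2⌋` to each initial vertex `v` (vertices which are not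
initial carry the junk color `0`). -/
structure ColoredBinTree : Type where
  /-- the underlying complete binary tree -/
  tree : BinTree
  /-- the color of each vertex (indexed by the path from the root) -/
  color : List Bool → ℕ
  color_le : ∀ p, BinTree.IsInitial tree p → color p ≤ BinTree.pathLen tree p / 2
  color_eq_zero : ∀ p, ¬ BinTree.IsInitial tree p → color p = 0

namespace ColoredBinTree

/-- The color number of a colored binary tree: the sum of the colors of its
initial vertices. -/
def colorNum (B : ColoredBinTree) : ℕ :=
  ((B.tree.vertices).map B.color).sum

/-- The initial vertex at path `p` is *proper*: its color is `2k` and the length of its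
associated maximal L-path is `4k` or `4k+1` for some nonnegative integer `k`. -/
def ProperAt (B : ColoredBinTree) (p : List Bool) : Prop :=
  ∃ k : ℕ, B.color p = 2 * k ∧
    (BinTree.pathLen B.tree p = 4 * k ∨ BinTree.pathLen B.tree p = 4 * k + 1)

/-- A colored binary tree is *proper* if all its initial vertices are proper. -/
def Proper (B : ColoredBinTree) : Prop :=
  ∀ p, BinTree.IsInitial B.tree p → B.ProperAt p

end ColoredBinTree

/-- A complete 5-ary tree: every internal vertex has exactly 5 (ordered) children. -/
inductive FiveTree : Type
  | leaf : FiveTree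
  | node : FiveTree → FiveTree → FiveTree → FiveTree → FiveTree → FiveTree

namespace FiveTree

/-- The number of internal vertices of a complete 5-ary tree. -/
def internals : FiveTree → ℕ
  | leaf => 0
  | node a b c d e =>
      internals a + internals b + internals c + internals d + internals e + 1

/-- The subtree rooted at the vertex reached from the root by the given path of child
indices; `none` if there is no such vertex. -/
def subtreeAt : FiveTree → List (Fin 5) → Option FiveTree
  | t, [] => some t
  | leaf, _ :: _ => none
  | node a _ _ _ _, ⟨0, _⟩ :: p => subtreeAt a p
  | node _ b _ _ _, ⟨1, _⟩ :: p => subtreeAt b p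
  | node _ _ c _ _, ⟨2, _⟩ :: p => subtreeAt c p
  | node _ _ _ d _, ⟨3, _⟩ :: p => subtreeAt d p
  | node _ _ _ _ e, ⟨_ + 4, _⟩ :: p => subtreeAt e p

/-- The list of (the paths from the root to) all vertices of a complete 5-ary tree. -/
def vertices : FiveTree → List (List (Fin 5))
  | leaf => [[]]
  | node a b c d e =>
      [] :: ((vertices a).map (List.cons 0) ++ (vertices b).map (List.cons 1) ++
        (vertices c).map (List.cons 2) ++ (vertices d).map (List.cons 3) ++
        (vertices e).map (List.cons 4))

end FiveTree

/-- A colored 5-ary tree: a complete 5-ary tree in which every vertex (internal or leaf)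
is assigned a nonnegative integer color (non-vertex paths carry the junk color `0`). -/
structure ColoredFiveTree : Type where
  /-- the underlying complete 5-ary tree -/
  tree : FiveTree
  /-- the color of each vertex (indexed by the path from the root) -/
  color : List (Fin 5) → ℕ
  color_eq_zero : ∀ p, ¬ (FiveTree.subtreeAt tree p).isSome → color p = 0

namespace ColoredFiveTree

/-- The sum of the colors of all vertices of a colored 5-ary tree. -/
def colorSum (T : ColoredFiveTree) : ℕ :=
  ((T.tree.vertices).map T.color).sum

/-- A colored 5-ary tree with `p` internal vertices has weight `n` iff its colors sum to
`n - 4p`; equivalently, its weight is `(sum of colors) + 4 · (number of internal vertices)`. -/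
def weight (T : ColoredFiveTree) : ℕ :=
  T.colorSum + 4 * T.tree.internals

end ColoredFiveTree

/-! A colored 5-ary tree is encoded as a binary tree by turning a color `k` into `k` vertices
whose left child is a leaf, and an internal vertex into four consecutive left steps. This
matches the weight with the number of internal vertices and is a bijection onto the binary
trees all of whose maximal L-paths have length `≡ 0, 1 (mod 4)`. Such a tree carries exactly
one proper coloring, `c(v) = 2 ⌊l(v)/4⌋`, and forests are handled tree by tree. -/

namespace BinTree

theorem isInitial_nil (t : BinTree) : IsInitial t [] :=
  ⟨by cases t <;> rfl, Or.inl rfl⟩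

theorem isInitial_node_true_cons (l r : BinTree) (p : List Bool) :
    IsInitial (node l r) (true :: p) ↔ IsInitial r p := by
  cases p <;> simp [IsInitial, subtreeAt, List.getLast?_cons_cons]

theorem isInitial_node_false_cons (l r : BinTree) (p : List Bool) :
    IsInitial (node l r) (false :: p) ↔ p ≠ [] ∧ IsInitial l p := by
  cases p <;> simp [IsInitial, subtreeAt, List.getLast?_cons_cons]

theorem forall_isInitial_iff (t : BinTree) (Q : List Bool → Prop) :
    (∀ p, IsInitial t p → Q p) ↔ Q [] ∧ ∀ b p, IsInitial t (b :: p) → Q (b :: p) :=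
  ⟨fun h => ⟨h [] (isInitial_nil t), fun _ _ => h _⟩, fun ⟨h, h'⟩ p =>
    match p with
    | [] => fun _ => h
    | b :: p => h' b p⟩

theorem pathLen_nil (t : BinTree) : pathLen t [] = t.leftLen := by
  cases t <;> rfl

theorem pathLen_node_cons (l r : BinTree) (b : Bool) (p : List Bool) :
    pathLen (node l r) (b :: p) = pathLen (cond b r l) p := by
  cases b <;> rfl

/-- `P` holds for the length of every maximal L-path of `t` that does not start at the root. -/
def AllLPathsBelow (P : ℕ → Prop) : BinTree → Prop
  | leaf => True
  | node l r => AllLPathsBelow P l ∧ P r.leftLen ∧ AllLPathsBelow P r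

variable (P : ℕ → Prop)

theorem forall_isInitial_cons_iff (t : BinTree) :
    (∀ b p, IsInitial t (b :: p) → P (pathLen t (b :: p))) ↔ AllLPathsBelow P t := by
  induction t with
  | leaf => simp [AllLPathsBelow, IsInitial, subtreeAt]
  | node l r ihl ihr =>
    have hl : (∀ p, p ≠ [] ∧ IsInitial l p → P (pathLen l p)) ↔
        ∀ b p, IsInitial l (b :: p) → P (pathLen l (b :: p)) :=
      ⟨fun h b p hp => h _ ⟨List.cons_ne_nil b p, hp⟩, fun h p ⟨hne, hp⟩ =>
        match p, hne with
        | b :: p, _ => h b p hp⟩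
    rw [Bool.forall_bool]
    simp only [isInitial_node_false_cons, isInitial_node_true_cons, pathLen_node_cons,
      cond_false, cond_true, hl, ihl, forall_isInitial_iff r, pathLen_nil, ihr, AllLPathsBelow]

theorem forall_isInitial_pathLen_iff (t : BinTree) :
    (∀ p, IsInitial t p → P (pathLen t p)) ↔ P t.leftLen ∧ AllLPathsBelow P t := by
  rw [forall_isInitial_iff, pathLen_nil, forall_isInitial_cons_iff]

def Admissible (t : BinTree) : Prop :=
  ∀ p, IsInitial t p → pathLen t p % 4 ≤ 1

theorem admissible_iff (t : BinTree) :
    t.Admissible ↔ t.leftLen % 4 ≤ 1 ∧ AllLPathsBelow (· % 4 ≤ 1) t :=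
  forall_isInitial_pathLen_iff (· % 4 ≤ 1) t

end BinTree

inductive LabeledFiveTree : Type
  | leaf : ℕ → LabeledFiveTree
  | node : ℕ → LabeledFiveTree → LabeledFiveTree → LabeledFiveTree → LabeledFiveTree →
      LabeledFiveTree → LabeledFiveTree

namespace LabeledFiveTree

def shape : LabeledFiveTree → FiveTree
  | leaf _ => .leaf
  | node _ a b c d e => .node (shape a) (shape b) (shape c) (shape d) (shape e)

/-- The label of the vertex at path `p` (junk value `0` if there is no such vertex). -/
def labelAt : LabeledFiveTree → List (Fin 5) → ℕ
  | leaf k, [] => k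
  | leaf _, _ :: _ => 0
  | node k _ _ _ _ _, [] => k
  | node _ a _ _ _ _, ⟨0, _⟩ :: p => labelAt a p
  | node _ _ b _ _ _, ⟨1, _⟩ :: p => labelAt b p
  | node _ _ _ c _ _, ⟨2, _⟩ :: p => labelAt c p
  | node _ _ _ _ d _, ⟨3, _⟩ :: p => labelAt d p
  | node _ _ _ _ _ e, ⟨_ + 4, _⟩ :: p => labelAt e p

def labelSum : LabeledFiveTree → ℕ
  | leaf k => k
  | node k a b c d e => k + (labelSum a + labelSum b + labelSum c + labelSum d + labelSum e)

def weight (x : LabeledFiveTree) : ℕ :=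
  x.labelSum + 4 * x.shape.internals

def ofLabels : FiveTree → (List (Fin 5) → ℕ) → LabeledFiveTree
  | .leaf, g => leaf (g [])
  | .node a b c d e, g =>
      node (g []) (ofLabels a (g ∘ List.cons 0)) (ofLabels b (g ∘ List.cons 1))
        (ofLabels c (g ∘ List.cons 2)) (ofLabels d (g ∘ List.cons 3))
        (ofLabels e (g ∘ List.cons 4))

theorem shape_ofLabels (t : FiveTree) (g : List (Fin 5) → ℕ) : (ofLabels t g).shape = t := by
  induction t generalizing g <;> simp [ofLabels, shape, *]

theorem labelAt_ofLabels (t : FiveTree) (g : List (Fin 5) → ℕ) (p : List (Fin 5)) :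
    (ofLabels t g).labelAt p = if (t.subtreeAt p).isSome then g p else 0 := by
  induction t generalizing g p with
  | leaf => cases p <;> rfl
  | node a b c d e iha ihb ihc ihd ihe =>
    rcases p with _ | ⟨i, p⟩
    · rfl
    · fin_cases i
      exacts [iha _ p, ihb _ p, ihc _ p, ihd _ p, ihe _ p]

theorem ofLabels_shape_labelAt (x : LabeledFiveTree) : ofLabels x.shape x.labelAt = x := by
  induction x with
  | leaf k => rfl
  | node k a b c d e iha ihb ihc ihd ihe =>
    conv_rhs => rw [← iha, ← ihb, ← ihc, ← ihd, ← ihe]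
    rfl

theorem labelSum_eq_sum_labelAt (x : LabeledFiveTree) :
    x.labelSum = (x.shape.vertices.map x.labelAt).sum := by
  induction x with
  | leaf k => simp [labelSum, shape, FiveTree.vertices, labelAt]
  | node k a b c d e iha ihb ihc ihd ihe =>
    simp only [labelSum, shape, FiveTree.vertices, List.map_cons, List.map_append, List.map_map,
      List.sum_cons, List.sum_append, iha, ihb, ihc, ihd, ihe]
    rfl

end LabeledFiveTree

namespace ColoredFiveTree

theorem ext {T₁ T₂ : ColoredFiveTree} (ht : T₁.tree = T₂.tree) (hc : T₁.color = T₂.color) :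
    T₁ = T₂ := by
  cases T₁; cases T₂; cases ht; cases hc; rfl

def equivLabeled : ColoredFiveTree ≃ LabeledFiveTree where
  toFun T := .ofLabels T.tree T.color
  invFun x := ⟨x.shape, x.labelAt, fun p hp => by
    rw [← x.ofLabels_shape_labelAt, LabeledFiveTree.labelAt_ofLabels, if_neg hp]⟩
  left_inv T := ext (LabeledFiveTree.shape_ofLabels _ _) <| funext fun p => by
    simp only [LabeledFiveTree.labelAt_ofLabels]
    split_ifs with hp
    exacts [rfl, (T.color_eq_zero p hp).symm]
  right_inv := LabeledFiveTree.ofLabels_shape_labelAt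

theorem weight_equivLabeled (T : ColoredFiveTree) : (equivLabeled T).weight = T.weight := by
  conv_rhs => rw [← equivLabeled.symm_apply_apply T]
  simp [equivLabeled, weight, colorSum, LabeledFiveTree.weight,
    LabeledFiveTree.labelSum_eq_sum_labelAt]

end ColoredFiveTree

namespace BinTree

def rightChain : ℕ → BinTree → BinTree
  | 0, t => t
  | c + 1, t => node leaf (rightChain c t)

theorem internals_rightChain (c : ℕ) (t : BinTree) :
    (rightChain c t).internals = c + t.internals := by
  induction c with
  | zero => simp [rightChain]
  | succ c ih => simp only [rightChain, internals, ih]; omega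

theorem allLPaths_rightChain {P : ℕ → Prop} (h1 : P 1) (c : ℕ) {t : BinTree}
    (ht : P t.leftLen ∧ AllLPathsBelow P t) :
    P (rightChain c t).leftLen ∧ AllLPathsBelow P (rightChain c t) := by
  induction c with
  | zero => exact ht
  | succ c ih => exact ⟨h1, trivial, ih⟩

end BinTree

namespace LabeledFiveTree

open BinTree

def addRootLabel (n : ℕ) : LabeledFiveTree → LabeledFiveTree
  | leaf k => leaf (k + n)
  | node k a b c d e => node (k + n) a b c d e

@[simp]
theorem addRootLabel_zero (x : LabeledFiveTree) : x.addRootLabel 0 = x := by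
  cases x <;> rfl

theorem addRootLabel_addRootLabel (m n : ℕ) (x : LabeledFiveTree) :
    (x.addRootLabel m).addRootLabel n = x.addRootLabel (m + n) := by
  cases x <;> simp [addRootLabel, Nat.add_assoc]

/-- The four left steps of an internal vertex carry the subtrees `a, b, c, d` on their right
and continue into the leftmost path of `e`. -/
def toBinTree : LabeledFiveTree → BinTree
  | leaf k => rightChain k .leaf
  | node k a b c d e =>
      rightChain k (.node (.node (.node (.node e.toBinTree d.toBinTree) c.toBinTree)
        b.toBinTree) a.toBinTree)

def ofBinTree : BinTree → LabeledFiveTree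
  | .leaf => leaf 0
  | .node .leaf r => (ofBinTree r).addRootLabel 1
  | .node (.node (.node (.node e d) c) b) a =>
      node 0 (ofBinTree a) (ofBinTree b) (ofBinTree c) (ofBinTree d) (ofBinTree e)
  | .node (.node .leaf _) _ | .node (.node (.node .leaf _) _) _ => leaf 0

theorem internals_toBinTree (x : LabeledFiveTree) : x.toBinTree.internals = x.weight := by
  induction x with
  | leaf k => simp [toBinTree, internals_rightChain, internals, weight, labelSum, shape,
      FiveTree.internals]
  | node k a b c d e iha ihb ihc ihd ihe =>
    simp only [weight] at *
    simp only [toBinTree, internals_rightChain, internals, iha, ihb, ihc, ihd, ihe, labelSum,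
      shape, FiveTree.internals]
    ring

theorem admissible_toBinTree (x : LabeledFiveTree) : x.toBinTree.Admissible := by
  rw [admissible_iff]
  induction x with
  | leaf k => exact allLPaths_rightChain (P := (· % 4 ≤ 1)) (by decide) k ⟨by decide, trivial⟩
  | node k a b c d e iha ihb ihc ihd ihe =>
    refine allLPaths_rightChain (P := (· % 4 ≤ 1)) (by decide) k ⟨?_, ?_⟩
    · simp only [leftLen]; omega
    · simp only [AllLPathsBelow]
      exact ⟨⟨⟨⟨ihe.2, ihd⟩, ihc⟩, ihb⟩, iha⟩

theorem toBinTree_addRootLabel_one (x : LabeledFiveTree) :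
    (x.addRootLabel 1).toBinTree = .node .leaf x.toBinTree := by
  cases x <;> rfl

theorem ofBinTree_rightChain (c : ℕ) (t : BinTree) :
    ofBinTree (rightChain c t) = (ofBinTree t).addRootLabel c := by
  induction c with
  | zero => simp [rightChain]
  | succ c ih => rw [rightChain, ofBinTree, ih, addRootLabel_addRootLabel, Nat.add_comm]

theorem ofBinTree_toBinTree (x : LabeledFiveTree) : ofBinTree x.toBinTree = x := by
  induction x with
  | leaf k => simp [toBinTree, ofBinTree_rightChain, ofBinTree, addRootLabel]
  | node k a b c d e iha ihb ihc ihd ihe =>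
    simp [toBinTree, ofBinTree_rightChain, ofBinTree, addRootLabel, *]

theorem toBinTree_ofBinTree :
    ∀ t : BinTree, t.leftLen % 4 ≤ 1 → AllLPathsBelow (· % 4 ≤ 1) t →
      (ofBinTree t).toBinTree = t
  | .leaf, _, _ => rfl
  | .node .leaf r, _, ⟨_, hr, hr'⟩ => by
    rw [ofBinTree, toBinTree_addRootLabel_one, toBinTree_ofBinTree r hr hr']
  | .node (.node (.node (.node e d) c) b) a, h, ⟨⟨⟨⟨he, hd, hd'⟩, hc, hc'⟩, hb, hb'⟩, ha, ha'⟩ => by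
    simp only [leftLen] at h
    simp only [ofBinTree, toBinTree, rightChain, toBinTree_ofBinTree a ha ha',
      toBinTree_ofBinTree b hb hb', toBinTree_ofBinTree c hc hc', toBinTree_ofBinTree d hd hd',
      toBinTree_ofBinTree e (by omega) he]
  | .node (.node .leaf _) _, h, _ | .node (.node (.node .leaf _) _) _, h, _ => by
    simp [leftLen] at h

end LabeledFiveTree

namespace BinTree

open Classical in
/-- The only candidate for a proper coloring of `t`. -/
noncomputable def properColoring (t : BinTree) : ColoredBinTree where
  tree := t
  color p := if IsInitial t p then 2 * (pathLen t p / 4) else 0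
  color_le p hp := by rw [if_pos hp]; omega
  color_eq_zero p hp := if_neg hp

theorem properColoring_proper {t : BinTree} (ht : t.Admissible) : t.properColoring.Proper :=
  fun p hp => ⟨pathLen t p / 4, if_pos hp, by
    change pathLen t p = 4 * (pathLen t p / 4) ∨ pathLen t p = 4 * (pathLen t p / 4) + 1
    have := ht p hp; omega⟩

end BinTree

namespace ColoredBinTree

theorem ext {B₁ B₂ : ColoredBinTree} (ht : B₁.tree = B₂.tree) (hc : B₁.color = B₂.color) :
    B₁ = B₂ := by
  cases B₁; cases B₂; cases ht; cases hc; rfl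

theorem Proper.admissible {B : ColoredBinTree} (hB : B.Proper) : B.tree.Admissible :=
  fun p hp => by obtain ⟨k, -, hk⟩ := hB p hp; omega

theorem Proper.properColoring_tree {B : ColoredBinTree} (hB : B.Proper) :
    B.tree.properColoring = B :=
  ext rfl <| funext fun p => by
    by_cases hp : B.tree.IsInitial p
    · obtain ⟨k, hc, hk⟩ := hB p hp
      simp only [BinTree.properColoring, if_pos hp, hc]
      omega
    · simp only [BinTree.properColoring, if_neg hp, B.color_eq_zero p hp]

noncomputable def properEquivAdmissible :
    {B : ColoredBinTree // B.Proper} ≃ {t : BinTree // t.Admissible} where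
  toFun B := ⟨B.1.tree, B.2.admissible⟩
  invFun t := ⟨t.1.properColoring, BinTree.properColoring_proper t.2⟩
  left_inv B := Subtype.ext B.2.properColoring_tree
  right_inv _ := rfl

end ColoredBinTree

namespace LabeledFiveTree

def equivAdmissible : LabeledFiveTree ≃ {t : BinTree // t.Admissible} where
  toFun x := ⟨x.toBinTree, x.admissible_toBinTree⟩
  invFun t := ofBinTree t
  left_inv := ofBinTree_toBinTree
  right_inv t := Subtype.ext <|
    have ht := (BinTree.admissible_iff _).1 t.2
    toBinTree_ofBinTree t ht.1 ht.2

end LabeledFiveTree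

namespace ColoredFiveTree

noncomputable def equivProper : ColoredFiveTree ≃ {B : ColoredBinTree // B.Proper} :=
  equivLabeled.trans <| LabeledFiveTree.equivAdmissible.trans
    ColoredBinTree.properEquivAdmissible.symm

theorem internals_equivProper (T : ColoredFiveTree) :
    (equivProper T).1.tree.internals = T.weight :=
  (LabeledFiveTree.internals_toBinTree _).trans (weight_equivLabeled T)

end ColoredFiveTree

def Equiv.forestsOfWeight {ι α β M : Type*} [Fintype ι] [AddCommMonoid M] {p : β → Prop}
    (e : α ≃ {b // p b}) (v : α → M) (w : β → M) (h : ∀ a, w (e a) = v a) (n : M) :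
    {F : ι → α // ∑ i, v (F i) = n} ≃ {G : ι → β // ∑ i, w (G i) = n ∧ ∀ i, p (G i)} where
  toFun F := ⟨fun i => e (F.1 i), by simpa only [h] using F.2, fun i => (e (F.1 i)).2⟩
  invFun G := ⟨fun i => e.symm ⟨G.1 i, G.2.2 i⟩, by
    simpa only [← h, Equiv.apply_symm_apply] using G.2.1⟩
  left_inv F := by ext; simp
  right_inv G := by ext; simp

theorem forests_five_ary_equiv_proper_forests_general (m : ℕ) (n : ℕ) :
    Nonempty ({F : Fin m → ColoredFiveTree // ∑ i, (F i).weight = n} ≃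
        {F : Fin m → ColoredBinTree //
          ∑ i, (F i).tree.internals = n ∧ ∀ i, (F i).Proper}) ∧
      Nat.card {F : Fin m → ColoredFiveTree // ∑ i, (F i).weight = n} =
        Nat.card {F : Fin m → ColoredBinTree //
          ∑ i, (F i).tree.internals = n ∧ ∀ i, (F i).Proper} :=
  let e := Equiv.forestsOfWeight ColoredFiveTree.equivProper ColoredFiveTree.weight
    (fun B => B.tree.internals) ColoredFiveTree.internals_equivProper n
  ⟨⟨e⟩, Nat.card_congr e⟩

/-- **The bijection between forests of colored 5-ary trees and proper forests of colored
binary trees.** For all positive integers `m` and nonnegative integers `n`, there is a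
bijection between the set of forests of `m` colored 5-ary trees of total weight `n` and
the set of proper forests of `m` colored binary trees with `n` internal vertices in
total; in particular these two sets have the same cardinality. -/
theorem forests_five_ary_equiv_proper_forests (m : ℕ) (hm : 0 < m) (n : ℕ) :
    Nonempty ({F : Fin m → ColoredFiveTree // ∑ i, (F i).weight = n} ≃
        {F : Fin m → ColoredBinTree //
          ∑ i, (F i).tree.internals = n ∧ ∀ i, (F i).Proper}) ∧
      Nat.card {F : Fin m → ColoredFiveTree // ∑ i, (F i).weight = n} =
        Nat.card {F : Fin m → ColoredBinTree //
          ∑ i, (F i).tree.internals = n ∧ ∀ i, (F i).Proper} :=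
  forests_five_ary_equiv_proper_forests_general m n
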